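/- For each fixed α ∈ (0,1), K ∈ ℕ, and 0 < δ < 1, the space B_{K,δ} of (equivalence classes of) L¹ functions on I_α = [α−1,α] admitting a representative g with sup_{k ≥ K} ( k^{−δ} var_{L_k} g + ∫_{L_k} |g| dx ) < ∞ is a Banach space under the norm ‖f‖_{K,δ} = inf over versions g of that quantity. -/

import Mathlib

/-!
A Cauchy sequence for `‖·‖_{K,δ}` is Cauchy pointwise on every `L_k`: if `x` lies in a component
`[c, d]` of `L_{k+1}`, then `|g x|` is at most the variation of `g` on `[c, d]` plus the mean of
`|g|` over it, and both are bounded by multiples of `‖g‖_{K,δ}`. The pointwise limit is the limit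
in norm because every term of the supremum defining `‖·‖_{K,δ}` is lower semicontinuous under
pointwise convergence: the variations as suprema of finite sums, the integral by Fatou's lemma.
-/

open Set MeasureTheory
open scoped ENNReal

/-- The `(K,δ)`-norm of a function on `I_α = [α-1, α]`:
`sup_{k ≥ K} ( k^{-δ} var_{L_k} g + ∫_{L_k} |g| )`, where
`L_k = [α-1, -1/(k+α)] ∪ [1/(k+α), α]`. -/
noncomputable def kdNorm (α : ℝ) (K : ℕ) (δ : ℝ) (g : ℝ → ℝ) : ℝ≥0∞ :=
  ⨆ k : ℕ, ⨆ _ : K ≤ k,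
    (ENNReal.ofReal ((k : ℝ) ^ (-δ)) *
        (eVariationOn g (Icc (1 / (k + α)) α) + eVariationOn g (Icc (α - 1) (-(1 / (k + α))))) +
      ENNReal.ofReal (∫ x in Icc (α - 1) (-(1 / (k + α))) ∪ Icc (1 / (k + α)) α, |g x|))

open Filter Topology

section Variation

variable {α E : Type*} [LinearOrder α]

theorem eVariationOn_sub_le [SeminormedAddCommGroup E] (g h : α → E) (s : Set α) :
    eVariationOn (fun x => g x - h x) s ≤ eVariationOn g s + eVariationOn h s := by
  refine iSup_le fun ⟨n, u, hu, us⟩ => ?_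
  calc ∑ i ∈ Finset.range n, edist (g (u (i + 1)) - h (u (i + 1))) (g (u i) - h (u i))
      ≤ ∑ i ∈ Finset.range n,
          (edist (g (u (i + 1))) (g (u i)) + edist (h (u (i + 1))) (h (u i))) := by
        refine Finset.sum_le_sum fun i _ => ?_
        simpa only [sub_eq_add_neg, edist_neg_neg] using
          edist_add_add_le (g (u (i + 1))) (-h (u (i + 1))) (g (u i)) (-h (u i))
    _ ≤ eVariationOn g s + eVariationOn h s := by
        rw [Finset.sum_add_distrib]
        exact add_le_add (eVariationOn.sum_le hu us) (eVariationOn.sum_le hu us)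

theorem eVariationOn_le_liminf [PseudoEMetricSpace E] {ι : Type*} {l : Filter ι}
    {G : ι → α → E} {g : α → E} {s : Set α}
    (hlim : ∀ x ∈ s, Tendsto (fun i => G i x) l (𝓝 (g x))) :
    eVariationOn g s ≤ liminf (fun i => eVariationOn (G i) s) l :=
  le_of_forall_lt_imp_le_of_dense fun _ hv =>
    le_liminf_of_le (by isBoundedDefault)
      ((eVariationOn.lowerSemicontinuous_aux hlim hv).mono fun _ => le_of_lt)

end Variation

theorem BoundedVariationOn.integrableOn_Icc {g : ℝ → ℝ} {c d : ℝ}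
    (h : BoundedVariationOn g (Icc c d)) : IntegrableOn g (Icc c d) := by
  obtain ⟨p, q, hp, hq, rfl⟩ := h.locallyBoundedVariationOn.exists_monotoneOn_sub_monotoneOn
  exact (hp.integrableOn_isCompact isCompact_Icc).sub (hq.integrableOn_isCompact isCompact_Icc)

theorem enorm_le_eVariationOn_add_lintegral_div {E : Type*} [SeminormedAddCommGroup E]
    {g : ℝ → E} {c d x : ℝ} (hcd : c < d) (hx : x ∈ Icc c d) :
    ‖g x‖ₑ ≤ eVariationOn g (Icc c d) + (∫⁻ y in Icc c d, ‖g y‖ₑ) / ENNReal.ofReal (d - c) := by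
  set V := eVariationOn g (Icc c d)
  have hlen : ENNReal.ofReal (d - c) ≠ 0 := by simpa using hcd
  have hpt : ∀ y ∈ Icc c d, ‖g x‖ₑ ≤ ‖g y‖ₑ + V := fun y hy => by
    rw [← edist_zero_right, ← edist_zero_right, add_comm]
    exact (edist_triangle _ (g y) _).trans (add_le_add_left (eVariationOn.edist_le g hx hy) _)
  have hmul : ‖g x‖ₑ * ENNReal.ofReal (d - c) ≤
      (∫⁻ y in Icc c d, ‖g y‖ₑ) + V * ENNReal.ofReal (d - c) := by
    calc ‖g x‖ₑ * ENNReal.ofReal (d - c) = ∫⁻ _ in Icc c d, ‖g x‖ₑ := by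
          rw [setLIntegral_const, Real.volume_Icc]
      _ ≤ ∫⁻ y in Icc c d, (‖g y‖ₑ + V) :=
          lintegral_mono_ae ((ae_restrict_iff' measurableSet_Icc).2 (ae_of_all _ hpt))
      _ = (∫⁻ y in Icc c d, ‖g y‖ₑ) + V * ENNReal.ofReal (d - c) := by
          rw [lintegral_add_right _ measurable_const, setLIntegral_const, Real.volume_Icc]
  rw [← ENNReal.le_div_iff_mul_le (Or.inl hlen) (Or.inl ENNReal.ofReal_ne_top), ENNReal.add_div,
    ENNReal.mul_div_cancel_right hlen ENNReal.ofReal_ne_top, add_comm] at hmul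
  exact hmul

theorem ENNReal.le_liminf_add {ι : Type*} {l : Filter ι} {u v : ι → ℝ≥0∞} :
    liminf u l + liminf v l ≤ liminf (fun i => u i + v i) l := by
  simp only [liminf_eq_iSup_iInf]
  refine ENNReal.biSup_add_biSup_le' ⟨univ, univ_mem⟩ ⟨univ, univ_mem⟩ fun s hs t ht => ?_
  exact le_iSup₂_of_le (s ∩ t) (inter_mem hs ht)
    (le_iInf₂ fun i hi => add_le_add (iInf₂_le i hi.1) (iInf₂_le i hi.2))

theorem ofReal_integral_abs_le_liminf {X ι : Type*} [MeasurableSpace X] {μ : Measure X}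
    {l : Filter ι} [l.IsCountablyGenerated] [l.NeBot] {G : ι → X → ℝ} {g : X → ℝ}
    (hint : ∀ i, Integrable (G i) μ) (hlim : ∀ᵐ x ∂μ, Tendsto (fun i => G i x) l (𝓝 (g x))) :
    ENNReal.ofReal (∫ x, |g x| ∂μ) ≤ liminf (fun i => ENNReal.ofReal (∫ x, |G i x| ∂μ)) l :=
  calc ENNReal.ofReal (∫ x, |g x| ∂μ) ≤ ∫⁻ x, ‖g x‖ₑ ∂μ := by
        simpa [Real.enorm_of_nonneg (integral_nonneg fun x => abs_nonneg (g x))] using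
          enorm_integral_le_lintegral_enorm (μ := μ) fun x => |g x|
    _ = ∫⁻ x, liminf (fun i => ‖G i x‖ₑ) l ∂μ :=
        lintegral_congr_ae <| hlim.mono fun _ hx =>
          ((continuous_enorm.tendsto _).comp hx).liminf_eq.symm
    _ ≤ liminf (fun i => ∫⁻ x, ‖G i x‖ₑ ∂μ) l :=
        lintegral_liminf_le' fun i => (hint i).aestronglyMeasurable.enorm
    _ = liminf (fun i => ENNReal.ofReal (∫ x, |G i x| ∂μ)) l := by
        simp only [← ofReal_integral_norm_eq_lintegral_enorm (hint _), Real.norm_eq_abs]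

section KDNorm

variable (α δ : ℝ)

def kdLeft (k : ℕ) : Set ℝ := Icc (α - 1) (-(1 / (k + α)))

def kdRight (k : ℕ) : Set ℝ := Icc (1 / (k + α)) α

noncomputable def kdTerm (g : ℝ → ℝ) (k : ℕ) : ℝ≥0∞ :=
  ENNReal.ofReal ((k : ℝ) ^ (-δ)) * (eVariationOn g (kdRight α k) + eVariationOn g (kdLeft α k)) +
    ENNReal.ofReal (∫ x in kdLeft α k ∪ kdRight α k, |g x|)

variable {α δ} {K k : ℕ}

theorem kdTerm_le_kdNorm (hk : K ≤ k) (g : ℝ → ℝ) : kdTerm α δ g k ≤ kdNorm α K δ g :=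
  le_iSup₂ (f := fun k (_ : K ≤ k) => kdTerm α δ g k) k hk

theorem kdNorm_le_iff {g : ℝ → ℝ} {M : ℝ≥0∞} :
    kdNorm α K δ g ≤ M ↔ ∀ k, K ≤ k → kdTerm α δ g k ≤ M :=
  iSup₂_le_iff

theorem ofReal_natCast_rpow_ne_zero (hk : 0 < k) : ENNReal.ofReal ((k : ℝ) ^ (-δ)) ≠ 0 :=
  (ENNReal.ofReal_pos.2 (Real.rpow_pos_of_pos (Nat.cast_pos.2 hk) _)).ne'

theorem integrableOn_of_kdTerm_ne_top (hk : 0 < k) {g : ℝ → ℝ} (h : kdTerm α δ g k ≠ ⊤) :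
    IntegrableOn g (kdLeft α k ∪ kdRight α k) := by
  have hV : eVariationOn g (kdRight α k) + eVariationOn g (kdLeft α k) ≠ ⊤ := fun hV =>
    h (by rw [kdTerm, hV, ENNReal.mul_top (ofReal_natCast_rpow_ne_zero hk), top_add])
  rw [ENNReal.add_ne_top] at hV
  exact (BoundedVariationOn.integrableOn_Icc hV.2).union (BoundedVariationOn.integrableOn_Icc hV.1)

theorem integrableOn_of_kdNorm_ne_top (hK : 1 ≤ K) (hk : K ≤ k) {g : ℝ → ℝ}
    (h : kdNorm α K δ g ≠ ⊤) : IntegrableOn g (kdLeft α k ∪ kdRight α k) :=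
  integrableOn_of_kdTerm_ne_top (by omega) (ne_top_of_le_ne_top h (kdTerm_le_kdNorm hk g))

theorem kdTerm_sub_le (hk : 0 < k) (p q : ℝ → ℝ) :
    kdTerm α δ (fun x => p x - q x) k ≤ kdTerm α δ p k + kdTerm α δ q k := by
  rcases eq_or_ne (kdTerm α δ p k) ⊤ with hp | hp
  · simp [hp]
  rcases eq_or_ne (kdTerm α δ q k) ⊤ with hq | hq
  · simp [hq]
  have hpi := integrableOn_of_kdTerm_ne_top hk hp
  have hqi := integrableOn_of_kdTerm_ne_top hk hq
  have hint : ∫ x in kdLeft α k ∪ kdRight α k, |p x - q x| ≤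
      (∫ x in kdLeft α k ∪ kdRight α k, |p x|) + ∫ x in kdLeft α k ∪ kdRight α k, |q x| := by
    rw [← integral_add hpi.abs hqi.abs]
    exact integral_mono (hpi.sub hqi).abs (hpi.abs.add hqi.abs) fun x => abs_sub _ _
  calc kdTerm α δ (fun x => p x - q x) k
      ≤ ENNReal.ofReal ((k : ℝ) ^ (-δ)) *
          ((eVariationOn p (kdRight α k) + eVariationOn q (kdRight α k)) +
            (eVariationOn p (kdLeft α k) + eVariationOn q (kdLeft α k))) +
          (ENNReal.ofReal (∫ x in kdLeft α k ∪ kdRight α k, |p x|) +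
            ENNReal.ofReal (∫ x in kdLeft α k ∪ kdRight α k, |q x|)) := by
        unfold kdTerm
        gcongr
        · exact eVariationOn_sub_le p q _
        · exact eVariationOn_sub_le p q _
        · exact (ENNReal.ofReal_le_ofReal hint).trans ENNReal.ofReal_add_le
    _ = kdTerm α δ p k + kdTerm α δ q k := by
        unfold kdTerm
        ring

theorem kdNorm_sub_le (hK : 1 ≤ K) (p q : ℝ → ℝ) :
    kdNorm α K δ (fun x => p x - q x) ≤ kdNorm α K δ p + kdNorm α K δ q :=
  kdNorm_le_iff.2 fun _ hk =>
    (kdTerm_sub_le (by omega) p q).trans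
      (add_le_add (kdTerm_le_kdNorm hk p) (kdTerm_le_kdNorm hk q))

theorem kdTerm_le_liminf {ι : Type*} {l : Filter ι} [l.IsCountablyGenerated] [l.NeBot]
    {G : ι → ℝ → ℝ} {g : ℝ → ℝ}
    (hlim : ∀ x ∈ kdLeft α k ∪ kdRight α k, Tendsto (fun i => G i x) l (𝓝 (g x)))
    (hint : ∀ i, IntegrableOn (G i) (kdLeft α k ∪ kdRight α k)) :
    kdTerm α δ g k ≤ liminf (fun i => kdTerm α δ (G i) k) l := by
  set w := ENNReal.ofReal ((k : ℝ) ^ (-δ))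
  have hR := eVariationOn_le_liminf fun x hx => hlim x (subset_union_right hx)
  have hL := eVariationOn_le_liminf fun x hx => hlim x (subset_union_left hx)
  have hI := ofReal_integral_abs_le_liminf hint
    ((ae_restrict_iff' (measurableSet_Icc.union measurableSet_Icc)).2 (ae_of_all _ hlim))
  calc kdTerm α δ g k
      ≤ w * (liminf (fun i => eVariationOn (G i) (kdRight α k)) l +
            liminf (fun i => eVariationOn (G i) (kdLeft α k)) l) +
          liminf (fun i => ENNReal.ofReal (∫ x in kdLeft α k ∪ kdRight α k, |G i x|)) l := by
        unfold kdTerm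
        gcongr
    _ ≤ liminf (fun i => w * (eVariationOn (G i) (kdRight α k) +
            eVariationOn (G i) (kdLeft α k))) l +
          liminf (fun i => ENNReal.ofReal (∫ x in kdLeft α k ∪ kdRight α k, |G i x|)) l := by
        rw [ENNReal.liminf_const_mul_of_ne_top ENNReal.ofReal_ne_top]
        gcongr
        exact ENNReal.le_liminf_add
    _ ≤ liminf (fun i => kdTerm α δ (G i) k) l := ENNReal.le_liminf_add

theorem kdNorm_le_of_tendsto {ι : Type*} {l : Filter ι} [l.IsCountablyGenerated] [l.NeBot]
    {G : ι → ℝ → ℝ} {g : ℝ → ℝ} {B : ℝ≥0∞}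
    (hlim : ∀ k, K ≤ k → ∀ x ∈ kdLeft α k ∪ kdRight α k, Tendsto (fun i => G i x) l (𝓝 (g x)))
    (hint : ∀ i k, K ≤ k → IntegrableOn (G i) (kdLeft α k ∪ kdRight α k))
    (hB : ∀ᶠ i in l, kdNorm α K δ (G i) ≤ B) :
    kdNorm α K δ g ≤ B :=
  kdNorm_le_iff.2 fun k hk =>
    (kdTerm_le_liminf (hlim k hk) fun i => hint i k hk).trans
      (liminf_le_of_frequently_le'
        (hB.mono fun _ hi => (kdTerm_le_kdNorm hk _).trans hi).frequently)

theorem enorm_le_mul_kdTerm {j : ℕ} (hj : 0 < j) {c d x : ℝ} (hcd : c < d)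
    (hJ : Icc c d ⊆ kdLeft α j ∨ Icc c d ⊆ kdRight α j) (hx : x ∈ Icc c d) (g : ℝ → ℝ) :
    ‖g x‖ₑ ≤ ((ENNReal.ofReal ((j : ℝ) ^ (-δ)))⁻¹ + (ENNReal.ofReal (d - c))⁻¹) *
      kdTerm α δ g j := by
  set w := ENNReal.ofReal ((j : ℝ) ^ (-δ))
  set M := kdTerm α δ g j
  rcases eq_or_ne M ⊤ with hM | hM
  · rw [hM, ENNReal.mul_top (by simp)]
    exact le_top
  have hS : Icc c d ⊆ kdLeft α j ∪ kdRight α j :=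
    hJ.elim (·.trans subset_union_left) (·.trans subset_union_right)
  have hV : eVariationOn g (Icc c d) ≤ M / w := by
    rw [ENNReal.le_div_iff_mul_le (Or.inl (ofReal_natCast_rpow_ne_zero hj))
      (Or.inl ENNReal.ofReal_ne_top), mul_comm]
    calc w * eVariationOn g (Icc c d)
        ≤ w * (eVariationOn g (kdRight α j) + eVariationOn g (kdLeft α j)) := by
          gcongr
          rcases hJ with h | h
          · exact (eVariationOn.mono g h).trans le_add_self
          · exact (eVariationOn.mono g h).trans le_self_add
      _ ≤ M := le_self_add
  have hI : ∫⁻ y in Icc c d, ‖g y‖ₑ ≤ M :=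
    calc ∫⁻ y in Icc c d, ‖g y‖ₑ ≤ ∫⁻ y in kdLeft α j ∪ kdRight α j, ‖g y‖ₑ := lintegral_mono_set hS
      _ = ENNReal.ofReal (∫ y in kdLeft α j ∪ kdRight α j, |g y|) := by
          simpa only [Real.norm_eq_abs] using
            (ofReal_integral_norm_eq_lintegral_enorm (integrableOn_of_kdTerm_ne_top hj hM)).symm
      _ ≤ M := le_add_self
  calc ‖g x‖ₑ ≤ eVariationOn g (Icc c d) + (∫⁻ y in Icc c d, ‖g y‖ₑ) / ENNReal.ofReal (d - c) :=
        enorm_le_eVariationOn_add_lintegral_div hcd hx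
    _ ≤ M / w + M / ENNReal.ofReal (d - c) := by gcongr
    _ = (w⁻¹ + (ENNReal.ofReal (d - c))⁻¹) * M := by
        simp only [div_eq_mul_inv]
        ring

theorem exists_enorm_le_mul_kdNorm (hα : 0 < α) (hk : K ≤ k) {x : ℝ}
    (hx : x ∈ kdLeft α k ∪ kdRight α k) : ∃ C ≠ ⊤, ∀ g, ‖g x‖ₑ ≤ C * kdNorm α K δ g := by
  have hcomponent : ∀ c d : ℝ, c < d → (Icc c d ⊆ kdLeft α (k + 1) ∨ Icc c d ⊆ kdRight α (k + 1)) →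
      x ∈ Icc c d → ∃ C ≠ ⊤, ∀ g, ‖g x‖ₑ ≤ C * kdNorm α K δ g := fun c d hcd hJ hxJ =>
    ⟨(ENNReal.ofReal (((k + 1 : ℕ) : ℝ) ^ (-δ)))⁻¹ + (ENNReal.ofReal (d - c))⁻¹,
      ENNReal.add_ne_top.2 ⟨ENNReal.inv_ne_top.2 (ofReal_natCast_rpow_ne_zero k.succ_pos),
        ENNReal.inv_ne_top.2 (by simpa using hcd)⟩,
      fun g => (enorm_le_mul_kdTerm k.succ_pos hcd hJ hxJ g).trans
        (by gcongr; exact kdTerm_le_kdNorm (by omega) g)⟩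
  have hpos : (0 : ℝ) < 1 / ((k + 1 : ℕ) + α) := by positivity
  have hlt : 1 / ((k + 1 : ℕ) + α) < 1 / (k + α) :=
    one_div_lt_one_div_of_lt (by positivity) (by push_cast; linarith)
  rcases hx with hx | hx
  · exact hcomponent _ _ (by linarith [hx.1, hx.2]) (Or.inl subset_rfl) ⟨hx.1, hx.2.trans (by linarith)⟩
  · exact hcomponent _ _ (by linarith [hx.1, hx.2]) (Or.inr subset_rfl) ⟨hlt.le.trans hx.1, hx.2⟩

theorem cauchySeq_apply_of_kdNorm (hα : 0 < α) (hk : K ≤ k) {x : ℝ}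
    (hx : x ∈ kdLeft α k ∪ kdRight α k) {f : ℕ → ℝ → ℝ}
    (hf : ∀ ε > 0, ∃ N, ∀ m ≥ N, ∀ n ≥ N, kdNorm α K δ (fun y => f m y - f n y) ≤ ε) :
    CauchySeq fun n => f n x := by
  obtain ⟨C, hC, hCx⟩ := exists_enorm_le_mul_kdNorm (δ := δ) hα hk hx
  refine EMetric.cauchySeq_iff.2 fun ε hε => ?_
  obtain ⟨η, hη, hηC⟩ := ENNReal.exists_pos_mul_lt hC hε.ne'
  obtain ⟨N, hN⟩ := hf η hη
  refine ⟨N, fun m hm n hn => ?_⟩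
  calc edist (f m x) (f n x) = ‖f m x - f n x‖ₑ := edist_eq_enorm_sub _ _
    _ ≤ C * kdNorm α K δ (fun y => f m y - f n y) := hCx _
    _ ≤ C * η := by gcongr; exact hN m hm n hn
    _ < ε := by rwa [mul_comm]

end KDNorm

theorem BKdelta_complete_general (α : ℝ) (hα : α ∈ Ioo (0:ℝ) 1) (K : ℕ) (hK : 1 ≤ K)
    (δ : ℝ)
    (f : ℕ → ℝ → ℝ) (hfin : ∀ n, kdNorm α K δ (f n) < ⊤)
    (hcauchy : ∀ ε : ℝ, 0 < ε → ∃ N, ∀ m ≥ N, ∀ n ≥ N,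
      kdNorm α K δ (fun x => f m x - f n x) ≤ ENNReal.ofReal ε) :
    ∃ F : ℝ → ℝ, kdNorm α K δ F < ⊤ ∧
      Filter.Tendsto (fun n => kdNorm α K δ (fun x => f n x - F x))
        Filter.atTop (nhds 0) := by
  have hcauchy' : ∀ ε > 0, ∃ N, ∀ m ≥ N, ∀ n ≥ N,
      kdNorm α K δ (fun x => f m x - f n x) ≤ ε := by
    intro ε hε
    rcases eq_or_ne ε ⊤ with rfl | hε'
    · exact ⟨0, fun _ _ _ _ => le_top⟩
    · simpa only [ENNReal.ofReal_toReal hε'] using hcauchy ε.toReal (ENNReal.toReal_pos hε.ne' hε')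
  -- `F` is only pinned down on `⋃ k, L_k = I_α \ {0}`, which is all that `kdNorm` sees.
  set F : ℝ → ℝ := fun x => limUnder atTop fun n => f n x
  have hF : ∀ k, K ≤ k → ∀ x ∈ kdLeft α k ∪ kdRight α k,
      Tendsto (fun n => f n x) atTop (𝓝 (F x)) := fun _ hk _ hx =>
    (cauchySeq_apply_of_kdNorm hα.1 hk hx hcauchy').tendsto_limUnder
  have hint : ∀ n k, K ≤ k → IntegrableOn (f n) (kdLeft α k ∪ kdRight α k) := fun n _ hk =>
    integrableOn_of_kdNorm_ne_top hK hk (hfin n).ne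
  have hconv : ∀ ε > 0, ∃ N, ∀ m ≥ N, kdNorm α K δ (fun x => f m x - F x) ≤ ε := by
    intro ε hε
    obtain ⟨N, hN⟩ := hcauchy' ε hε
    exact ⟨N, fun m hm => kdNorm_le_of_tendsto (G := fun n x => f m x - f n x)
      (fun k hk x hx => tendsto_const_nhds.sub (hF k hk x hx))
      (fun n k hk => (hint m k hk).sub (hint n k hk)) (eventually_atTop.2 ⟨N, hN m hm⟩)⟩
  obtain ⟨N, hN⟩ := hconv 1 one_pos
  refine ⟨F, ?_, ENNReal.tendsto_atTop_zero.2 hconv⟩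
  calc kdNorm α K δ F = kdNorm α K δ (fun x => f N x - (f N x - F x)) := by
        simp only [sub_sub_cancel]
    _ ≤ kdNorm α K δ (f N) + kdNorm α K δ (fun x => f N x - F x) := kdNorm_sub_le hK _ _
    _ < ⊤ := ENNReal.add_lt_top.2 ⟨hfin N, (hN N le_rfl).trans_lt ENNReal.one_lt_top⟩

/-- the space `B_{K,δ}` is complete (hence a Banach space): every Cauchy
sequence for the `(K,δ)`-norm converges in that norm to an element of finite norm. -/
theorem BKdelta_complete (α : ℝ) (hα : α ∈ Ioo (0:ℝ) 1) (K : ℕ) (hK : 1 ≤ K)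
    (δ : ℝ) (hδ : δ ∈ Ioo (0:ℝ) 1)
    (f : ℕ → ℝ → ℝ) (hfin : ∀ n, kdNorm α K δ (f n) < ⊤)
    (hcauchy : ∀ ε : ℝ, 0 < ε → ∃ N, ∀ m ≥ N, ∀ n ≥ N,
      kdNorm α K δ (fun x => f m x - f n x) ≤ ENNReal.ofReal ε) :
    ∃ F : ℝ → ℝ, kdNorm α K δ F < ⊤ ∧
      Filter.Tendsto (fun n => kdNorm α K δ (fun x => f n x - F x))
        Filter.atTop (nhds 0) :=
  BKdelta_complete_general α hα K hK δ f hfin hcauchy
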